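/- Let N ≥ 2, c > 0, t ≥ 0 an integer, and L ∈ ℝ^N. Let w ∈ Δ_N be any minimizer over the probability simplex Δ_N of the function w ↦ ⟨L, w⟩ − (√(t+1)/c)·H_B(w). Then for every i ∈ [N]: w_i ≤ exp( −c²·(L_i − min_{j∈[N]} L_j)² / (2·(t+1)) ). -/

import Mathlib

/-!
Let `j` minimize `L`. Moving mass `ε` from `w i` to `w j` cannot decrease the objective at the
minimizer `w`. On `(0, 1)` the derivative of `h_B` is `√(2 log (1/x)) + (N - 1)√(π/2)`: it is
decreasing, and at least `(N - 1)√(π/2)`, a lower slope that survives the jump of `h_B` at `0`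
because `erf ≤ 1`. Comparing the first-order changes gives
`L i - L j ≤ (√(t+1)/c) √(2 log (1 / (w i - ε)))`; letting `ε → 0⁺` and solving for `w i` gives
the bound.
-/

/-- The error function `erf(z) = (2/√π)∫_0^z e^{-u²} du`. -/
noncomputable def erf (z : ℝ) : ℝ :=
  2 / Real.sqrt Real.pi * ∫ u in (0 : ℝ)..z, Real.exp (-u ^ 2)

/-- `h_B(x) = x·√(2·log(1/x)) − √(π/2)·erf(√(log(1/x))) + x·(N−1)·√(π/2)` for `x ∈ (0,1]`,
with `h_B(0) = −√(π/2)`. -/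
noncomputable def hB (N : ℕ) (x : ℝ) : ℝ :=
  if x = 0 then -Real.sqrt (Real.pi / 2)
  else x * Real.sqrt (2 * Real.log (1 / x))
    - Real.sqrt (Real.pi / 2) * erf (Real.sqrt (Real.log (1 / x)))
    + x * ((N : ℝ) - 1) * Real.sqrt (Real.pi / 2)

noncomputable def HB {N : ℕ} (w : Fin N → ℝ) : ℝ := ∑ i, hB N (w i)

open Real Set Filter Topology MeasureTheory

lemma integrable_exp_neg_sq : Integrable fun u : ℝ => exp (-u ^ 2) := by
  simpa using integrable_exp_neg_mul_sq one_pos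

lemma erf_le_one (z : ℝ) : erf z ≤ 1 := by
  have hgauss : ∫ u in Ioi (0 : ℝ), exp (-u ^ 2) = √π / 2 := by
    simpa using integral_gaussian_Ioi 1
  have hhalf : ∫ u in (0 : ℝ)..z, exp (-u ^ 2) ≤ √π / 2 := by
    rcases le_total 0 z with hz | hz
    · rw [intervalIntegral.integral_of_le hz, ← hgauss]
      exact setIntegral_mono_set integrable_exp_neg_sq.integrableOn
        (Eventually.of_forall fun u => (exp_pos _).le) Ioc_subset_Ioi_self.eventuallyLE
    · rw [intervalIntegral.integral_symm]
      have := intervalIntegral.integral_nonneg (μ := volume) hz fun u _ => (exp_pos (-u ^ 2)).le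
      linarith [sqrt_nonneg π]
  rw [erf, div_mul_eq_mul_div, div_le_one (by positivity)]
  linarith

lemma hasDerivAt_erf (z : ℝ) : HasDerivAt erf (2 / √π * exp (-z ^ 2)) z := by
  have hcont : Continuous fun u : ℝ => exp (-u ^ 2) := by fun_prop
  exact (intervalIntegral.integral_hasDerivAt_right integrable_exp_neg_sq.intervalIntegrable
    hcont.aestronglyMeasurable.stronglyMeasurableAtFilter hcont.continuousAt).const_mul _

@[fun_prop]
lemma continuous_erf : Continuous erf :=
  continuous_iff_continuousAt.2 fun z => (hasDerivAt_erf z).continuousAt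

lemma hB_of_ne_zero (N : ℕ) {x : ℝ} (hx : x ≠ 0) :
    hB N x = x * √(2 * log (1 / x)) - √(π / 2) * erf (√(log (1 / x)))
      + x * ((N : ℝ) - 1) * √(π / 2) :=
  if_neg hx

lemma continuousOn_hB (N : ℕ) : ContinuousOn (hB N) (Ioi 0) := by
  intro x (hx : 0 < x)
  have hEq : (fun y => y * √(2 * log (1 / y)) - √(π / 2) * erf (√(log (1 / y)))
      + y * ((N : ℝ) - 1) * √(π / 2)) =ᶠ[𝓝 x] hB N := by
    filter_upwards [eventually_ne_nhds hx.ne'] with y hy using (hB_of_ne_zero N hy).symm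
  refine (ContinuousAt.congr ?_ hEq).continuousWithinAt
  have hx0 : x ≠ 0 := hx.ne'
  fun_prop (disch := simpa)

lemma hasDerivAt_hB (N : ℕ) {x : ℝ} (hx : x ∈ Ioo (0 : ℝ) 1) :
    HasDerivAt (hB N) (√(2 * log (1 / x)) + ((N : ℝ) - 1) * √(π / 2)) x := by
  obtain ⟨hx0, hx1⟩ := hx
  have hu0 : 0 < log (1 / x) := log_pos (one_lt_one_div hx0 hx1)
  have hlog : HasDerivAt (fun y => log (1 / y)) (-x⁻¹) x :=
    (hasDerivAt_log hx0.ne').neg.congr_of_eventuallyEq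
      (Eventually.of_forall fun y => by simp only [one_div, log_inv, Pi.neg_apply])
  have hsum := (((hasDerivAt_id x).mul
      ((hasDerivAt_sqrt (by positivity : 2 * log (1 / x) ≠ 0)).comp x (hlog.const_mul 2))).sub
    (((hasDerivAt_erf _).comp x ((hasDerivAt_sqrt hu0.ne').comp x hlog)).const_mul (√(π / 2)))).add
    (((hasDerivAt_id x).mul_const ((N : ℝ) - 1)).mul_const (√(π / 2)))
  have hEq : (fun y => id y * √(2 * log (1 / y)) - √(π / 2) * erf (√(log (1 / y)))
      + id y * ((N : ℝ) - 1) * √(π / 2)) =ᶠ[𝓝 x] hB N := by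
    filter_upwards [eventually_ne_nhds hx0.ne'] with y hy using (hB_of_ne_zero N hy).symm
  refine (hsum.congr_of_eventuallyEq hEq.symm).congr_deriv ?_
  have hexp : exp (-√(log (1 / x)) ^ 2) = x := by
    rw [sq_sqrt hu0.le, one_div, log_inv, neg_neg, exp_log hx0]
  -- the two singular terms `∓ 1 / √(2 log (1 / x))` cancel
  simp only [Function.comp_apply, id]
  rw [hexp, sqrt_mul zero_le_two, sqrt_div pi_pos.le]
  field_simp
  ring

lemma hB_sub_le (N : ℕ) {a b : ℝ} (hb : 0 < b) (hba : b ≤ a) (ha : a ≤ 1) :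
    hB N a - hB N b ≤ (√(2 * log (1 / b)) + ((N : ℝ) - 1) * √(π / 2)) * (a - b) := by
  have hderiv : ∀ x ∈ interior (Icc b a),
      HasDerivAt (hB N) (√(2 * log (1 / x)) + ((N : ℝ) - 1) * √(π / 2)) x := by
    rw [interior_Icc]
    exact fun x hx => hasDerivAt_hB N ⟨hb.trans hx.1, hx.2.trans_le ha⟩
  refine (convex_Icc b a).image_sub_le_mul_sub_of_deriv_le
    ((continuousOn_hB N).mono fun x hx => hb.trans_le hx.1)
    (fun x hx => (hderiv x hx).differentiableAt.differentiableWithinAt)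
    (fun x hx => ?_) b (left_mem_Icc.2 hba) a (right_mem_Icc.2 hba) hba
  rw [(hderiv x hx).deriv]
  rw [interior_Icc] at hx
  have hx0 : 0 < x := hb.trans hx.1
  gcongr
  exact hx.1.le

lemma hB_zero_add_le (N : ℕ) {b : ℝ} (hb : 0 ≤ b) :
    hB N 0 + ((N : ℝ) - 1) * √(π / 2) * b ≤ hB N b := by
  rcases hb.eq_or_lt with rfl | hb
  · simp
  rw [hB_of_ne_zero N hb.ne', hB, if_pos rfl]
  have herf := erf_le_one (√(log (1 / b)))
  have hprod : 0 ≤ b * √(2 * log (1 / b)) := by positivity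
  nlinarith [sqrt_nonneg (π / 2)]

lemma mul_sub_le_hB_sub (N : ℕ) {a b : ℝ} (ha : 0 ≤ a) (hab : a ≤ b) (hb : b ≤ 1) :
    ((N : ℝ) - 1) * √(π / 2) * (b - a) ≤ hB N b - hB N a := by
  rcases ha.eq_or_lt with rfl | ha
  · linarith [hB_zero_add_le N hab]
  have hderiv : ∀ x ∈ interior (Icc a b),
      HasDerivAt (hB N) (√(2 * log (1 / x)) + ((N : ℝ) - 1) * √(π / 2)) x := by
    rw [interior_Icc]
    exact fun x hx => hasDerivAt_hB N ⟨ha.trans hx.1, hx.2.trans_le hb⟩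
  refine (convex_Icc a b).mul_sub_le_image_sub_of_le_deriv
    ((continuousOn_hB N).mono fun x hx => ha.trans_le hx.1)
    (fun x hx => (hderiv x hx).differentiableAt.differentiableWithinAt)
    (fun x hx => ?_) a (left_mem_Icc.2 hab) b (right_mem_Icc.2 hab) hab
  rw [(hderiv x hx).deriv]
  exact le_add_of_nonneg_left (sqrt_nonneg _)

section Exchange

variable {ι : Type*} [DecidableEq ι]

def transferMass (w : ι → ℝ) (i j : ι) (ε : ℝ) : ι → ℝ :=
  Function.update (Function.update w i (w i - ε)) j (w j + ε)

lemma transferMass_apply_right (w : ι → ℝ) (i j : ι) (ε : ℝ) :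
    transferMass w i j ε j = w j + ε :=
  Function.update_self _ _ _

variable [Fintype ι]

lemma sum_apply_update (φ : ι → ℝ → ℝ) (w : ι → ℝ) (i : ι) (a : ℝ) :
    ∑ k, φ k (Function.update w i a k) = ∑ k, φ k (w k) + (φ i a - φ i (w i)) := by
  simp only [Function.apply_update φ]
  rw [Finset.sum_update_of_mem (Finset.mem_univ i),
    Finset.sum_eq_add_sum_sdiff_singleton_of_mem (Finset.mem_univ i)]
  ring

variable {w : ι → ℝ} {i j : ι} {ε : ℝ}

lemma sum_apply_transferMass (φ : ι → ℝ → ℝ) (hij : i ≠ j) :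
    ∑ k, φ k (transferMass w i j ε k) =
      ∑ k, φ k (w k) + (φ i (w i - ε) - φ i (w i)) + (φ j (w j + ε) - φ j (w j)) := by
  rw [transferMass, sum_apply_update, sum_apply_update, Function.update_of_ne hij.symm]

lemma transferMass_mem_stdSimplex (hw : w ∈ stdSimplex ℝ ι) (hij : i ≠ j) (hε : 0 ≤ ε)
    (hεw : ε ≤ w i) : transferMass w i j ε ∈ stdSimplex ℝ ι := by
  refine ⟨fun k => ?_, ?_⟩
  · unfold transferMass
    rcases eq_or_ne k j with rfl | hkj
    · rw [Function.update_self]; linarith [hw.1 k]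
    rcases eq_or_ne k i with rfl | hki
    · rw [Function.update_of_ne hkj, Function.update_self]; linarith
    rw [Function.update_of_ne hkj, Function.update_of_ne hki]
    exact hw.1 k
  · rw [sum_apply_transferMass (fun _ x => x) hij, hw.2]
    ring

lemma mul_sub_le_of_isMinOn (L : ι → ℝ) (η : ℝ) (φ : ℝ → ℝ)
    (hmin : IsMinOn (fun v => ∑ k, L k * v k - η * ∑ k, φ (v k)) (stdSimplex ℝ ι) w)
    (hw : w ∈ stdSimplex ℝ ι) (hij : i ≠ j) (hε : 0 ≤ ε) (hεw : ε ≤ w i) :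
    ε * (L i - L j) ≤ η * ((φ (w i) - φ (w i - ε)) - (φ (w j + ε) - φ (w j))) := by
  have h := isMinOn_iff.1 hmin _ (transferMass_mem_stdSimplex hw hij hε hεw)
  simp only [sum_apply_transferMass (fun k x => L k * x) hij,
    sum_apply_transferMass (fun _ => φ) hij] at h
  linear_combination h

end Exchange

lemma sub_le_mul_sqrt_log_of_isMinOn {ι : Type*} [Fintype ι] [DecidableEq ι] (N : ℕ)
    (L : ι → ℝ) {η : ℝ} (hη : 0 ≤ η) {w : ι → ℝ}
    (hmin : IsMinOn (fun v => ∑ k, L k * v k - η * ∑ k, hB N (v k)) (stdSimplex ℝ ι) w)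
    (hw : w ∈ stdSimplex ℝ ι) {i : ι} (hi : 0 < w i) (j : ι) :
    L i - L j ≤ η * √(2 * log (1 / w i)) := by
  rcases eq_or_ne i j with rfl | hij
  · rw [sub_self]
    positivity
  have hbound : ∀ ε ∈ Ioo 0 (w i), L i - L j ≤ η * √(2 * log (1 / (w i - ε))) := by
    rintro ε ⟨hε, hεw⟩
    have hexch := mul_sub_le_of_isMinOn L η (hB N) hmin hw hij hε.le hεw.le
    have hloss := hB_sub_le N (sub_pos.2 hεw) (sub_le_self _ hε.le)
      (mem_Icc_of_mem_stdSimplex hw i).2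
    have hgain := mul_sub_le_hB_sub N (hw.1 j) (le_add_of_nonneg_right hε.le)
      (transferMass_apply_right w i j ε ▸
        (mem_Icc_of_mem_stdSimplex (transferMass_mem_stdSimplex hw hij hε.le hεw.le) j).2)
    rw [sub_sub_cancel] at hloss
    rw [add_sub_cancel_left] at hgain
    refine le_of_mul_le_mul_left ?_ hε
    nlinarith
  have hlim : Tendsto (fun ε => η * √(2 * log (1 / (w i - ε)))) (𝓝[>] 0)
      (𝓝 (η * √(2 * log (1 / w i)))) := by
    refine tendsto_nhdsWithin_of_tendsto_nhds ?_
    have hi0 : w i - 0 ≠ 0 := by simpa using hi.ne'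
    simpa using (by fun_prop (disch := simpa) :
      ContinuousAt (fun ε => η * √(2 * log (1 / (w i - ε)))) 0).tendsto
  exact ge_of_tendsto hlim (eventually_of_mem (Ioo_mem_nhdsGT hi) hbound)

lemma le_exp_neg_sq_div_of_le_mul_sqrt_log {x d η : ℝ} (hx : 0 < x) (hx1 : x ≤ 1) (hd : 0 ≤ d)
    (hη : 0 < η) (h : d ≤ η * √(2 * log (1 / x))) : x ≤ exp (-d ^ 2 / (2 * η ^ 2)) := by
  have hlog : 0 ≤ log (1 / x) := log_nonneg (one_le_one_div hx hx1)
  have hsq := pow_le_pow_left₀ hd h 2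
  rw [mul_pow, sq_sqrt (by positivity), one_div, log_inv] at hsq
  rw [← exp_log hx, exp_le_exp, le_div_iff₀ (by positivity)]
  linarith

theorem stmt13_general (N : ℕ) (c : ℝ) (hc : 0 < c) (t : ℕ) (L : Fin N → ℝ)
    (w : Fin N → ℝ) (hw : w ∈ stdSimplex ℝ (Fin N))
    (hmin : ∀ v ∈ stdSimplex ℝ (Fin N),
      (∑ i, L i * w i) - Real.sqrt ((t : ℝ) + 1) / c * HB w ≤
        (∑ i, L i * v i) - Real.sqrt ((t : ℝ) + 1) / c * HB v)
    (i : Fin N) :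
    w i ≤ Real.exp (-(c ^ 2 * (L i - sInf (Set.range L)) ^ 2) / (2 * ((t : ℝ) + 1))) := by
  have : Nonempty (Fin N) := ⟨i⟩
  obtain ⟨j, hj⟩ := exists_eq_ciInf_of_finite (f := L)
  have hLj : L j ≤ L i := hj ▸ ciInf_le (Finite.bddBelow_range L) i
  rcases (hw.1 i).eq_or_lt with hwi | hwi
  · rw [← hwi]
    positivity
  have hη : 0 < √((t : ℝ) + 1) / c := by positivity
  have hkey := sub_le_mul_sqrt_log_of_isMinOn N L hη.le (isMinOn_iff.2 hmin) hw hwi j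
  convert le_exp_neg_sq_div_of_le_mul_sqrt_log hwi (mem_Icc_of_mem_stdSimplex hw i).2
    (sub_nonneg.2 hLj) hη hkey using 2
  rw [← iInf, ← hj, div_pow, sq_sqrt (by positivity)]
  field_simp

/-- if `w` minimizes `w ↦ ⟨L, w⟩ − (√(t+1)/c)·H_B(w)` over the probability
simplex `Δ_N` (`N ≥ 2`, `c > 0`, `t ≥ 0` an integer, `L ∈ ℝ^N`), then for every `i`,
`w_i ≤ exp(−c²·(L_i − min_j L_j)² / (2·(t+1)))`. -/
theorem stmt13 (N : ℕ) (hN : 2 ≤ N) (c : ℝ) (hc : 0 < c) (t : ℕ) (L : Fin N → ℝ)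
    (w : Fin N → ℝ) (hw : w ∈ stdSimplex ℝ (Fin N))
    (hmin : ∀ v ∈ stdSimplex ℝ (Fin N),
      (∑ i, L i * w i) - Real.sqrt ((t : ℝ) + 1) / c * HB w ≤
        (∑ i, L i * v i) - Real.sqrt ((t : ℝ) + 1) / c * HB v)
    (i : Fin N) :
    w i ≤ Real.exp (-(c ^ 2 * (L i - sInf (Set.range L)) ^ 2) / (2 * ((t : ℝ) + 1))) :=
  stmt13_general N c hc t L w hw hmin i
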